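/- arXiv:1903.06420 — 2 statements merged into one kernel-verified Lean document; each statement's English description precedes it below -/
import Mathlib

section
/- The basic degradation mapping f at level k (defined on a subset D) is injective on D, hence |f(D)| = |D|. -/
/-- The covering relation on n-bit integers. -/
def cov (n j i : ℕ) : Prop := ∀ t < n, j.testBit t = true → i.testBit t = true

/-- `i` with bit `k` cleared (set to 0). -/
def clearBit (i k : ℕ) : ℕ := if i.testBit k then i - 2 ^ k else i

lemma clearBit_testBit (i k t : ℕ) :
    (clearBit i k).testBit t = (i.testBit t && decide (t ≠ k)) := by
  unfold clearBit
  split_ifs with hk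
  · -- bit k of i is set
    set q := i / 2 ^ (k + 1) with hq
    set r := i % 2 ^ (k + 1) with hr
    have hi : i = 2 ^ (k + 1) * q + r := (Nat.div_add_mod i (2 ^ (k+1))).symm
    have hrlt : r < 2 ^ (k + 1) := Nat.mod_lt _ (by positivity)
    have hrk : r.testBit k = true := by
      have := Nat.testBit_two_pow_mul_add q hrlt k
      rw [← hi] at this
      simpa [Nat.lt_succ_self] using this.symm.trans hk
    have h2r : 2 ^ k ≤ r := by
      by_contra hc
      push_neg at hc
      simp [Nat.testBit_lt_two_pow hc] at hrk
    set r' := r - 2 ^ k with hr'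
    have hre : r = 2 ^ k + r' := by omega
    have hr'lt : r' < 2 ^ k := by
      have := hrlt
      rw [pow_succ] at this
      omega
    have hsub : i - 2 ^ k = 2 ^ (k + 1) * q + r' := by omega
    rw [hsub, Nat.testBit_two_pow_mul_add q (by omega : r' < 2 ^ (k+1)) t]
    have hit : i.testBit t = if t < k + 1 then r.testBit t else q.testBit (t - (k+1)) := by
      conv_lhs => rw [hi]
      exact Nat.testBit_two_pow_mul_add q hrlt t
    rw [hit]
    rcases lt_trichotomy t k with h | rfl | h
    · simp only [if_pos (by omega : t < k + 1)]
      rw [hre, Nat.testBit_two_pow_add_gt h r']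
      simp [Nat.ne_of_lt h]
    · simp [Nat.lt_succ_self, Nat.testBit_lt_two_pow hr'lt, hrk]
    · simp only [if_neg (by omega : ¬ t < k + 1)]
      simp only [ne_eq, decide_not]
      rw [decide_eq_false (by omega : ¬ t = k)]
      simp
  · -- bit k of i is not set
    rcases eq_or_ne t k with rfl | h
    · simp [hk]
    · simp [h]

/-- The basic degradation mapping at level `k` on a set `D`: if the bit-`k` flip of `i`
lies in `D` then `i` maps to itself, otherwise `i` maps to `i` with bit `k` cleared. -/
def bdm (D : Finset ℕ) (k i : ℕ) : ℕ := if (i ^^^ 2 ^ k) ∈ D then i else clearBit i k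

lemma xor_testBit (i k t : ℕ) :
    (i ^^^ 2 ^ k).testBit t = (i.testBit t).xor (decide (k = t)) := by
  rw [Nat.testBit_xor, Nat.testBit_two_pow]

/-- The basic degradation mapping at level `k` is injective on `D`,
hence the image has the same cardinality as `D`. -/
theorem bdm_injOn (n k : ℕ) (hk : k < n) (D : Finset ℕ) (hD : ∀ i ∈ D, i < 2 ^ n) :
    Set.InjOn (bdm D k) D ∧ (D.image (bdm D k)).card = D.card := by
  have hinj : Set.InjOn (bdm D k) D := by
    intro a ha b hb h
    unfold bdm at h
    split_ifs at h with hA hB hB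
    · exact h
    · -- a = clearBit b k
      by_cases hbk : b.testBit k
      · exfalso
        have : b ^^^ 2 ^ k = a := by
          apply Nat.eq_of_testBit_eq
          intro t
          rw [xor_testBit, h, clearBit_testBit]
          rcases eq_or_ne t k with rfl | ht
          · simp [hbk]
          · simp [ht, Ne.symm ht]
        exact hB (this ▸ ha)
      · have : clearBit b k = b := by
          apply Nat.eq_of_testBit_eq
          intro t
          rw [clearBit_testBit]
          rcases eq_or_ne t k with rfl | ht
          · simp [hbk]
          · simp [ht]
        rw [h, this]
    · -- clearBit a k = b
      by_cases hak : a.testBit k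
      · exfalso
        have : a ^^^ 2 ^ k = b := by
          apply Nat.eq_of_testBit_eq
          intro t
          rw [xor_testBit, ← h, clearBit_testBit]
          rcases eq_or_ne t k with rfl | ht
          · simp [hak]
          · simp [ht, Ne.symm ht]
        exact hA (this ▸ hb)
      · have : clearBit a k = a := by
          apply Nat.eq_of_testBit_eq
          intro t
          rw [clearBit_testBit]
          rcases eq_or_ne t k with rfl | ht
          · simp [hak]
          · simp [ht]
        rw [← h, this]
    · -- clearBit a k = clearBit b k
      have hbits : ∀ t, t ≠ k → a.testBit t = b.testBit t := by
        intro t ht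
        have := congrArg (fun x => x.testBit t) h
        simpa [clearBit_testBit, ht] using this
      by_cases hak : a.testBit k <;> by_cases hbk : b.testBit k
      · apply Nat.eq_of_testBit_eq
        intro t
        rcases eq_or_ne t k with rfl | ht
        · rw [hak, hbk]
        · exact hbits t ht
      · exfalso
        apply hA
        have : a ^^^ 2 ^ k = b := by
          apply Nat.eq_of_testBit_eq
          intro t
          rw [xor_testBit]
          rcases eq_or_ne t k with rfl | ht
          · simp [hak, hbk]
          · simp [Ne.symm ht, hbits t ht]
        exact this ▸ hb
      · exfalso
        apply hB
        have : b ^^^ 2 ^ k = a := by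
          apply Nat.eq_of_testBit_eq
          intro t
          rw [xor_testBit]
          rcases eq_or_ne t k with rfl | ht
          · simp [hak, hbk]
          · simp [Ne.symm ht, (hbits t ht).symm]
        exact this ▸ ha
      · apply Nat.eq_of_testBit_eq
        intro t
        rcases eq_or_ne t k with rfl | ht
        · simp only [Bool.not_eq_true] at hak hbk
          rw [hak, hbk]
        · exact hbits t ht
  exact ⟨hinj, Finset.card_image_of_injOn hinj⟩
end

section
/- Let D ⊆ {0,...,2^n-1} and let g_n ∘ ... ∘ g_1 denote the composition of the basic degradation mappings at levels 1 through n applied to D. Then for every i ∈ D, the k-th bit of the image of i after applying levels 1 through k is less than or equal to the k-th bit of the image of i after levels 1 through k−1; consequently the final image of i is covered by i under ⪯_c. -/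
/-- The general degradation process over levels `1,...,k`. -/
def trace (D0 : Finset ℕ) : ℕ → ℕ → ℕ
  | 0, i => i
  | k + 1, i => bdm (D0.image (trace D0 k)) k (trace D0 k i)

lemma xor_pow_eq_add' {j k : ℕ} (h : j.testBit k = false) : j ^^^ 2 ^ k = j + 2 ^ k := by
  induction k generalizing j with
  | zero =>
    have hm : j % 2 = 0 := by simpa [Nat.testBit, Nat.and_one_is_mod] using h
    have h1 : (j ^^^ 1) / 2 = j / 2 := by simpa using Nat.xor_div_two (a := j) (b := 1)
    have h2 : (j ^^^ 1) % 2 = 1 := by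
      rw [Nat.xor_mod_two_eq_one]; omega
    have := Nat.div_add_mod (j ^^^ 1) 2
    simp only [pow_zero]
    omega
  | succ k ih =>
    have h2 : (j / 2).testBit k = false := by simpa [Nat.testBit_succ] using h
    have hih := ih h2
    have hd : (j ^^^ 2 ^ (k+1)) / 2 = j / 2 ^^^ 2 ^ k := by
      rw [Nat.xor_div_two, pow_succ, Nat.mul_div_cancel]; omega
    have hm : (j ^^^ 2 ^ (k+1)) % 2 = j % 2 := by
      have hp : 2 ^ (k+1) % 2 = 0 := by simp [pow_succ]
      rcases Nat.mod_two_eq_zero_or_one (j ^^^ 2 ^ (k+1)) with hx | hx <;>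
      rcases Nat.mod_two_eq_zero_or_one j with hj | hj <;>
      · have := (Nat.xor_mod_two_eq_one (a := j) (b := 2 ^ (k+1)))
        omega
    have hde := Nat.div_add_mod (j ^^^ 2 ^ (k+1)) 2
    have hde2 := Nat.div_add_mod j 2
    have : 2 ^ (k+1) = 2 * 2 ^ k := by ring
    omega

lemma sub_pow_eq_xor' {i k : ℕ} (h : i.testBit k = true) : i - 2 ^ k = i ^^^ 2 ^ k := by
  have hf : (i ^^^ 2 ^ k).testBit k = false := by
    simp [Nat.testBit_xor, h]
  have := xor_pow_eq_add' hf
  rw [Nat.xor_assoc, Nat.xor_self, Nat.xor_zero] at this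
  omega

lemma clearBit_testBit' {j m t : ℕ} (h : (clearBit j m).testBit t = true) :
    j.testBit t = true := by
  unfold clearBit at h
  split at h
  · next hb =>
    rw [sub_pow_eq_xor' hb, Nat.testBit_xor, Nat.testBit_two_pow] at h
    rcases eq_or_ne m t with rfl | hne
    · simp [hb] at h
    · simpa [hne] using h
  · exact h

lemma bdm_testBit' {D : Finset ℕ} {k j t : ℕ} (h : (bdm D k j).testBit t = true) :
    j.testBit t = true := by
  unfold bdm at h
  split at h
  · exact h
  · exact clearBit_testBit' h

lemma trace_testBit (D : Finset ℕ) (m i t : ℕ)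
    (h : (trace D m i).testBit t = true) : i.testBit t = true := by
  induction m with
  | zero => exact h
  | succ m ih => exact ih (bdm_testBit' h)

/-- Along the general degradation process, applying the level-`k` mapping can only
decrease bit `k` of the image of `i`; consequently the final image of `i` after all
`n` levels is covered by `i`. -/
theorem trace_bit_mono (n : ℕ) (D : Finset ℕ) (hD : ∀ i ∈ D, i < 2 ^ n)
    (i : ℕ) (hi : i ∈ D) :
    (∀ k < n, (trace D (k + 1) i).testBit k = true → (trace D k i).testBit k = true) ∧
    cov n (trace D n i) i := by
  constructor
  · intro k _ h
    exact bdm_testBit' h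
  · intro t _ h
    exact trace_testBit D n i t h
end
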